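/- (Serial optimal sampling parameters.) Let κ_i > 0, ρ ∈ (0,1), κ̃_i = 1 + κ_i/ρ², μ_g, μ_i > 0, ‖A_i‖² = κ_i μ_g μ_i, and n ≥ 2. Define the probabilities p_i = (1 + √κ̃_i)/(n + Σ_{j=1}^n √κ̃_j). Then Σ_{i=1}^n p_i = 1, and the rate θ_opt = 1 − 2/(n + Σ_{j=1}^n √κ̃_j) together with the step sizes σ_i = μ_i^{-1}/(√κ̃_i − 1) and τ = μ_g^{-1}/(n − 2 + Σ_{j=1}^n √κ̃_j) satisfies θ_opt (1 + √κ̃_i) = 1 + √κ̃_i − 2 p_i for all i, as well as the serial-sampling step size conditions: θ_opt ≥ 1/(1 + 2 τ μ_g), θ_opt ≥ max_i ( 1 − 2 σ_i μ_i p_i / (1 + 2 σ_i μ_i) ), and max_i τ σ_i ‖A_i‖² θ_opt ≤ ρ² p_i. -/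

import Mathlib

/-! With `s = √κ̃_i`, `D = n + Σ_j √κ̃_j` and `θ = 1 − 2/D`, the step sizes are chosen so that
`τ μ_g = 1/(D − 2)` and `σ_i μ_i = 1/(s − 1)`. Then `1 + 2τμ_g = D/(D − 2)` and
`1 + 2σ_iμ_i = (s + 1)/(s − 1)`, so both strong-convexity conditions hold with equality, and
since `κ_i = ρ²(s − 1)(s + 1)` the ESO condition `τσ_i‖A_i‖²θ ≤ ρ²p_i` holds with equality too. -/

open Finset

namespace SPDHG

lemma one_lt_sqrt_one_add_div_sq {κ ρ : ℝ} (hκ : 0 < κ) (hρ : ρ ≠ 0) :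
    1 < √(1 + κ / ρ ^ 2) := by
  rw [Real.lt_sqrt zero_le_one, one_pow, lt_add_iff_pos_right]
  positivity

lemma sum_one_add_div_card_add_sum {ι : Type*} [Fintype ι] (s : ι → ℝ)
    (h : (Fintype.card ι : ℝ) + ∑ j, s j ≠ 0) :
    ∑ i, (1 + s i) / ((Fintype.card ι : ℝ) + ∑ j, s j) = 1 := by
  rw [← sum_div, sum_add_distrib, div_eq_one_iff_eq h]
  simp

lemma one_div_one_add_two_mul_primal_step {μ c D : ℝ} (hμ : μ ≠ 0) (hc : c ≠ 0) (hD : D ≠ 0)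
    (hcD : c + 2 = D) :
    1 / (1 + 2 * (μ⁻¹ / c) * μ) = 1 - 2 / D := by
  subst hcD
  field_simp
  ring

lemma one_sub_two_mul_dual_step_mul_div {μ s D : ℝ} (hμ : μ ≠ 0) (hs : 1 < s) :
    1 - 2 * (μ⁻¹ / (s - 1)) * μ * ((1 + s) / D) / (1 + 2 * (μ⁻¹ / (s - 1)) * μ) =
      1 - 2 / D := by
  have hs₁ : s - 1 ≠ 0 := sub_ne_zero_of_ne hs.ne'
  have hs₂ : 1 + s ≠ 0 := by positivity
  have hratio : 2 * (μ⁻¹ / (s - 1)) * μ / (1 + 2 * (μ⁻¹ / (s - 1)) * μ) = 2 / (1 + s) := by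
    have hdenom : 1 + 2 * (μ⁻¹ / (s - 1)) * μ = (1 + s) / (s - 1) := by
      field_simp
      ring
    rw [hdenom]
    field_simp
  rw [mul_div_right_comm, hratio, div_mul_div_cancel₀ hs₂]

lemma step_product_mul_rate {μg μ κ ρ s c D : ℝ} (hμg : μg ≠ 0) (hμ : μ ≠ 0) (hρ : ρ ≠ 0)
    (hs : s ≠ 1) (hc : c ≠ 0) (hD : D ≠ 0) (hcD : c + 2 = D) (hsq : s ^ 2 = 1 + κ / ρ ^ 2) :
    μg⁻¹ / c * (μ⁻¹ / (s - 1)) * (κ * μg * μ) * (1 - 2 / D) = ρ ^ 2 * ((1 + s) / D) := by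
  have hκ : κ = ρ ^ 2 * (s - 1) * (s + 1) := by
    field_simp at hsq
    linear_combination -hsq
  have hs₁ : s - 1 ≠ 0 := sub_ne_zero_of_ne hs
  subst hκ hcD
  field_simp
  ring

end SPDHG

open SPDHG in
theorem spdhg_serial_optimal_parameters {n : ℕ} (hn : 2 ≤ n)
    (κ μ normA : Fin n → ℝ) (μg ρ : ℝ)
    (hκ : ∀ i, 0 < κ i) (hρ : ρ ∈ Set.Ioo (0 : ℝ) 1) (hμg : 0 < μg) (hμ : ∀ i, 0 < μ i)
    (hA : ∀ i, normA i ^ 2 = κ i * μg * μ i) :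
    let sqκ : Fin n → ℝ := fun j => Real.sqrt (1 + κ j / ρ ^ 2)
    let sumκ : ℝ := ∑ j, sqκ j
    let p : Fin n → ℝ := fun i => (1 + sqκ i) / ((n : ℝ) + sumκ)
    let θopt : ℝ := 1 - 2 / ((n : ℝ) + sumκ)
    let σ : Fin n → ℝ := fun i => (μ i)⁻¹ / (sqκ i - 1)
    let τ : ℝ := μg⁻¹ / ((n : ℝ) - 2 + sumκ)
    (∑ i, p i = 1) ∧
    (∀ i, θopt * (1 + sqκ i) = 1 + sqκ i - 2 * p i) ∧
    (1 / (1 + 2 * τ * μg) ≤ θopt) ∧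
    (∀ i, 1 - 2 * σ i * μ i * p i / (1 + 2 * σ i * μ i) ≤ θopt) ∧
    (∀ i, τ * σ i * normA i ^ 2 * θopt ≤ ρ ^ 2 * p i) := by
  intro sqκ sumκ p θopt σ τ
  have hρ₀ : ρ ≠ 0 := hρ.1.ne'
  have hs : ∀ i, 1 < sqκ i := fun i => one_lt_sqrt_one_add_div_sq (hκ i) hρ₀
  have hsum : (n : ℝ) ≤ sumκ := by
    simpa using card_nsmul_le_sum univ sqκ 1 fun i _ => (hs i).le
  have hn₂ : (2 : ℝ) ≤ n := by exact_mod_cast hn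
  have hD : (n : ℝ) + sumκ ≠ 0 := by positivity
  have hD₂ : (n : ℝ) - 2 + sumκ ≠ 0 := by linarith
  refine ⟨by simpa using sum_one_add_div_card_add_sum sqκ (by simpa using hD),
    fun i => by ring,
    (one_div_one_add_two_mul_primal_step hμg.ne' hD₂ hD (by ring)).le,
    fun i => (one_sub_two_mul_dual_step_mul_div (hμ i).ne' (hs i)).le, fun i => ?_⟩
  have hsq : sqκ i ^ 2 = 1 + κ i / ρ ^ 2 := Real.sq_sqrt (by have := hκ i; positivity)
  rw [hA i]
  exact (step_product_mul_rate hμg.ne' (hμ i).ne' hρ₀ (hs i).ne' hD₂ hD (by ring) hsq).le
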